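/- arXiv:2604.09165 — 12 statements merged into one kernel-verified Lean document; each statement's English description precedes it below -/
import Mathlib

section
/- Lockstep relative bisimilarity is sound for relative trace equality: if (s₁, s₂, h₁, h₂) ∈ rbisim_lockstep then ⟦s₁⟧_C = ⟦s₂⟧_C implies ⟦h₁⟧_H = ⟦h₂⟧_H. -/
/-- A deterministic transition system with leakage. -/
structure TS (S : Type*) (A : Type*) where
  next : S → S
  leak : S → A

namespace TS

/-- The infinite leakage trace of a state. -/
def trace {S A : Type*} (T : TS S A) (s : S) : ℕ → A :=
  fun n => T.leak (T.next^[n] s)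

/-- The functional whose greatest fixpoint is bisimilarity. -/
def bisimF {S A : Type*} (T : TS S A) : Set (S × S) →o Set (S × S) where
  toFun R := {p | T.leak p.1 = T.leak p.2 ∧ (T.next p.1, T.next p.2) ∈ R}
  monotone' := fun _ _ h _ hp => ⟨hp.1, h hp.2⟩

/-- Bisimilarity. -/
def bisim {S A : Type*} (T : TS S A) : Set (S × S) := OrderHom.gfp (bisimF T)

end TS

/-- Quadruples of two contract states and two hardware states. -/
abbrev Quad (Sc Sh : Type*) := Sc × Sc × Sh × Sh

section Rel

variable {Sc A Sh B : Type*}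

/-- Inner (inductive) functional of relative bisimilarity, parameterized by `R1`. -/
def rinner (C : TS Sc A) (H : TS Sh B) (R1 : Set (Quad Sc Sh)) :
    Set (Quad Sc Sh) →o Set (Quad Sc Sh) where
  toFun R2 := {q | C.leak q.1 ≠ C.leak q.2.1 ∨
      (C.next q.1, C.next q.2.1, q.2.2.1, q.2.2.2) ∈ R2 ∨
      (H.leak q.2.2.1 = H.leak q.2.2.2 ∧
        (q.1, q.2.1, H.next q.2.2.1, H.next q.2.2.2) ∈ R1)}
  monotone' := fun _ _ h _ hq => by
    rcases hq with h1 | h2 | h3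
    · exact Or.inl h1
    · exact Or.inr (Or.inl (h h2))
    · exact Or.inr (Or.inr h3)

/-- The mixed functional for relative bisimilarity: contract steps inductive,
hardware steps coinductive. -/
def rbisimF (C : TS Sc A) (H : TS Sh B) : Set (Quad Sc Sh) →o Set (Quad Sc Sh) where
  toFun R1 := OrderHom.lfp (rinner C H R1)
  monotone' := fun R R' h => OrderHom.lfp.monotone (fun _ _ hq => by
    rcases hq with h1 | h2 | h3
    · exact Or.inl h1
    · exact Or.inr (Or.inl h2)
    · exact Or.inr (Or.inr ⟨h3.1, h h3.2⟩))

/-- Relative bisimilarity. -/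
def rbisim (C : TS Sc A) (H : TS Sh B) : Set (Quad Sc Sh) :=
  OrderHom.gfp (rbisimF C H)

/-- The lockstep functional for relative bisimilarity. -/
def rbisimLockF (C : TS Sc A) (H : TS Sh B) : Set (Quad Sc Sh) →o Set (Quad Sc Sh) where
  toFun R := {q | C.leak q.1 ≠ C.leak q.2.1 ∨
      (H.leak q.2.2.1 = H.leak q.2.2.2 ∧
        (C.next q.1, C.next q.2.1, H.next q.2.2.1, H.next q.2.2.2) ∈ R)}
  monotone' := fun _ _ h _ hq => by
    rcases hq with h1 | h2
    · exact Or.inl h1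
    · exact Or.inr ⟨h2.1, h h2.2⟩

/-- Lockstep relative bisimilarity. -/
def rbisimLock (C : TS Sc A) (H : TS Sh B) : Set (Quad Sc Sh) :=
  OrderHom.gfp (rbisimLockF C H)

/-- The naive relaxed (purely coinductive) functional. -/
def rbisimRelaxedF (C : TS Sc A) (H : TS Sh B) : Set (Quad Sc Sh) →o Set (Quad Sc Sh) where
  toFun R := {q | C.leak q.1 ≠ C.leak q.2.1 ∨
      (C.next q.1, C.next q.2.1, q.2.2.1, q.2.2.2) ∈ R ∨
      (H.leak q.2.2.1 = H.leak q.2.2.2 ∧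
        (q.1, q.2.1, H.next q.2.2.1, H.next q.2.2.2) ∈ R)}
  monotone' := fun _ _ h _ hq => by
    rcases hq with h1 | h2 | h3
    · exact Or.inl h1
    · exact Or.inr (Or.inl (h h2))
    · exact Or.inr (Or.inr ⟨h3.1, h h3.2⟩)

/-- Relaxed relative bisimilarity (unsound). -/
def rbisimRelaxed (C : TS Sc A) (H : TS Sh B) : Set (Quad Sc Sh) :=
  OrderHom.gfp (rbisimRelaxedF C H)

end Rel

/-- Parameterized greatest fixpoint (Paco): `GF F I = νX. F (X ∪ I)`. -/
def GF {U : Type*} (F : Set U →o Set U) (I : Set U) : Set U :=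
  OrderHom.gfp ⟨fun X => F (X ∪ I),
    fun _ _ h => F.monotone (Set.union_subset_union h (subset_refl I))⟩

/-! Along a pair of agreeing contract traces the lockstep relation can never use its escape
clause (diverging contract leakage), so it forces the hardware leakages to agree at every step. -/

section Lockstep

variable {Sc A Sh B : Type*} {C : TS Sc A} {H : TS Sh B}

theorem mem_rbisimLock_iff {q : Quad Sc Sh} :
    q ∈ rbisimLock C H ↔ C.leak q.1 ≠ C.leak q.2.1 ∨
      (H.leak q.2.2.1 = H.leak q.2.2.2 ∧
        (C.next q.1, C.next q.2.1, H.next q.2.2.1, H.next q.2.2.2) ∈ rbisimLock C H) := by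
  conv_lhs => rw [rbisimLock, ← OrderHom.map_gfp]
  rfl

theorem rbisimLock_step {s1 s2 : Sc} {h1 h2 : Sh} (h : (s1, s2, h1, h2) ∈ rbisimLock C H)
    (hleak : C.leak s1 = C.leak s2) :
    H.leak h1 = H.leak h2 ∧ (C.next s1, C.next s2, H.next h1, H.next h2) ∈ rbisimLock C H :=
  (mem_rbisimLock_iff.mp h).resolve_left (not_not_intro hleak)

theorem rbisimLock_iterate {s1 s2 : Sc} {h1 h2 : Sh} (h : (s1, s2, h1, h2) ∈ rbisimLock C H)
    {n : ℕ} (hagree : ∀ k < n, C.trace s1 k = C.trace s2 k) :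
    (C.next^[n] s1, C.next^[n] s2, H.next^[n] h1, H.next^[n] h2) ∈ rbisimLock C H := by
  induction n with
  | zero => exact h
  | succ n ih =>
    have hstep := rbisimLock_step (ih fun k hk => hagree k (by omega)) (hagree n n.lt_succ_self)
    simpa only [Function.iterate_succ_apply'] using hstep.2

end Lockstep

theorem rbisimLock_sound {Sc A Sh B : Type*} (C : TS Sc A) (H : TS Sh B)
    (s1 s2 : Sc) (h1 h2 : Sh) (h : (s1, s2, h1, h2) ∈ rbisimLock C H) :
    C.trace s1 = C.trace s2 → H.trace h1 = H.trace h2 := by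
  intro htrace
  funext n
  exact (rbisimLock_step (rbisimLock_iterate h fun k _ => congrFun htrace k)
    (congrFun htrace n)).1
end

section
/- Lockstep relative bisimilarity is incomplete for relative trace equality: there exist transition systems C, H and states s₁, s₂, h₁, h₂ such that ⟦s₁⟧_C = ⟦s₂⟧_C implies ⟦h₁⟧_H = ⟦h₂⟧_H, yet (s₁, s₂, h₁, h₂) ∉ rbisim_lockstep. -/
theorem rbisimLock_incomplete :
    ∃ (Sc A Sh B : Type) (C : TS Sc A) (H : TS Sh B) (s1 s2 : Sc) (h1 h2 : Sh),
      (C.trace s1 = C.trace s2 → H.trace h1 = H.trace h2) ∧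
      (s1, s2, h1, h2) ∉ rbisimLock C H := by
  refine ⟨ℕ, Bool, Bool, Bool,
    ⟨Nat.succ, fun n => decide (2 ≤ n)⟩,
    ⟨id, id⟩, 0, 1, false, true, ?_, ?_⟩
  · intro h
    have := congrFun h 1
    simp [TS.trace] at this
  · intro hmem
    have hfix : rbisimLock (⟨Nat.succ, fun n => decide (2 ≤ n)⟩ : TS ℕ Bool)
        (⟨id, id⟩ : TS Bool Bool) =
        rbisimLockF _ _ (rbisimLock _ _) := (OrderHom.map_gfp _).symm
    rw [rbisimLock] at hmem
    rw [← OrderHom.map_gfp] at hmem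
    rcases hmem with h1 | h2
    · exact h1 rfl
    · simp at h2
end

section
/- Relative bisimilarity (with contract steps treated inductively and hardware steps coinductively) exactly characterizes relative trace equality: (s₁, s₂, h₁, h₂) ∈ rbisim if and only if ⟦s₁⟧_C = ⟦s₂⟧_C implies ⟦h₁⟧_H = ⟦h₂⟧_H. -/
section Proof

variable {Sc A Sh B : Type*} (C : TS Sc A) (H : TS Sh B)

private lemma trace_zero {S A : Type*} (T : TS S A) (s : S) : T.trace s 0 = T.leak s := rfl

private lemma trace_succ' {S A : Type*} (T : TS S A) (s : S) (n : ℕ) :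
    T.trace s (n+1) = T.trace (T.next s) n := by
  simp [TS.trace, Function.iterate_succ_apply]

private lemma trace_next_eq {S A : Type*} {T : TS S A} {s1 s2 : S}
    (h : T.trace s1 = T.trace s2) : T.trace (T.next s1) = T.trace (T.next s2) := by
  funext n
  rw [← trace_succ', ← trace_succ', h]

private lemma mem_lfp_of_trace_ne (R : Set (Quad Sc Sh)) :
    ∀ n (s1 s2 : Sc) (h1 h2 : Sh), C.trace s1 n ≠ C.trace s2 n →
      (s1, s2, h1, h2) ∈ OrderHom.lfp (rinner C H R) := by
  intro n
  induction n with
  | zero =>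
    intro s1 s2 h1 h2 hne
    rw [← OrderHom.map_lfp]
    exact Or.inl hne
  | succ k ih =>
    intro s1 s2 h1 h2 hne
    rw [← OrderHom.map_lfp]
    refine Or.inr (Or.inl ?_)
    exact ih _ _ h1 h2 (by rwa [trace_succ', trace_succ'] at hne)

/-- The target set. -/
private def Tset : Set (Quad Sc Sh) :=
  {q | C.trace q.1 = C.trace q.2.1 → H.trace q.2.2.1 = H.trace q.2.2.2}

private lemma Tset_le : Tset C H ⊆ rbisim C H := by
  apply OrderHom.le_gfp
  intro q hq
  show q ∈ OrderHom.lfp (rinner C H (Tset C H))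
  obtain ⟨s1, s2, h1, h2⟩ := q
  by_cases hc : C.trace s1 = C.trace s2
  · have hh : H.trace h1 = H.trace h2 := hq hc
    rw [← OrderHom.map_lfp]
    refine Or.inr (Or.inr ⟨?_, ?_⟩)
    · have := congrFun hh 0
      simpa [trace_zero] using this
    · intro _
      exact trace_next_eq hh
  · obtain ⟨n, hn⟩ := Function.ne_iff.mp hc
    exact mem_lfp_of_trace_ne C H _ n s1 s2 h1 h2 hn

private lemma step_lemma :
    OrderHom.lfp (rinner C H (rbisim C H)) ⊆
      {q : Quad Sc Sh | C.trace q.1 = C.trace q.2.1 →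
        H.leak q.2.2.1 = H.leak q.2.2.2 ∧
        ∃ s1' s2', C.trace s1' = C.trace s2' ∧
          (s1', s2', H.next q.2.2.1, H.next q.2.2.2) ∈ rbisim C H} := by
  apply OrderHom.lfp_le
  rintro ⟨s1, s2, h1, h2⟩ hq hc
  rcases hq with hne | hstep | ⟨hl, hR⟩
  · exact absurd (congrFun hc 0) hne
  · exact hstep (trace_next_eq hc)
  · exact ⟨hl, s1, s2, hc, hR⟩

private lemma rbisim_to_trace :
    ∀ n (s1 s2 : Sc) (h1 h2 : Sh), (s1, s2, h1, h2) ∈ rbisim C H →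
      C.trace s1 = C.trace s2 → H.trace h1 n = H.trace h2 n := by
  intro n
  induction n with
  | zero =>
    intro s1 s2 h1 h2 hmem hc
    have hmem' : (s1, s2, h1, h2) ∈ OrderHom.lfp (rinner C H (rbisim C H)) :=
      (OrderHom.map_gfp (rbisimF C H)).symm ▸ hmem
    exact (step_lemma C H hmem' hc).1
  | succ k ih =>
    intro s1 s2 h1 h2 hmem hc
    have hmem' : (s1, s2, h1, h2) ∈ OrderHom.lfp (rinner C H (rbisim C H)) :=
      (OrderHom.map_gfp (rbisimF C H)).symm ▸ hmem
    obtain ⟨_, s1', s2', hc', hR⟩ := step_lemma C H hmem' hc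
    rw [trace_succ', trace_succ']
    exact ih s1' s2' _ _ hR hc'

end Proof

theorem rbisim_iff_relative_trace_eq {Sc A Sh B : Type*} (C : TS Sc A) (H : TS Sh B)
    (s1 s2 : Sc) (h1 h2 : Sh) :
    (s1, s2, h1, h2) ∈ rbisim C H ↔
      (C.trace s1 = C.trace s2 → H.trace h1 = H.trace h2) := by
  constructor
  · intro hmem hc
    funext n
    exact rbisim_to_trace C H n s1 s2 h1 h2 hmem hc
  · intro h
    exact Tset_le C H h
end

section
/- Proofs by relative bisimulation are sound and complete: (⟦s₁⟧_C = ⟦s₂⟧_C → ⟦h₁⟧_H = ⟦h₂⟧_H) if and only if there exists a relation R with (s₁, s₂, h₁, h₂) ∈ R and R ⊆ rbisimF(R). -/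
section Aux

variable {Sc A Sh B : Type*} (C : TS Sc A) (H : TS Sh B)

lemma trace_next {S A : Type*} (T : TS S A) (s : S) :
    T.trace (T.next s) = fun n => T.trace s (n + 1) := by
  funext n
  simp [TS.trace, Function.iterate_succ_apply]

lemma trace_eq_next {S A : Type*} (T : TS S A) {s1 s2 : S}
    (h : T.trace s1 = T.trace s2) : T.trace (T.next s1) = T.trace (T.next s2) := by
  rw [trace_next, trace_next, h]

lemma leak_eq_of_trace_eq {S A : Type*} (T : TS S A) {s1 s2 : S}
    (h : T.trace s1 = T.trace s2) : T.leak s1 = T.leak s2 := by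
  have := congrFun h 0
  simpa [TS.trace] using this

/-- The semantic relation: relative trace equality. -/
def semRel : Set (Quad Sc Sh) :=
  {q | C.trace q.1 = C.trace q.2.1 → H.trace q.2.2.1 = H.trace q.2.2.2}

/-- Completeness helper: if contract traces differ at step n, the quad is in the lfp. -/
lemma diff_mem_lfp (R : Set (Quad Sc Sh)) (n : ℕ) :
    ∀ s1 s2 : Sc, ∀ h1 h2 : Sh,
      C.leak (C.next^[n] s1) ≠ C.leak (C.next^[n] s2) →
      (s1, s2, h1, h2) ∈ OrderHom.lfp (rinner C H R) := by
  induction n with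
  | zero =>
    intro s1 s2 h1 h2 hne
    rw [← OrderHom.map_lfp (rinner C H R)]
    exact Or.inl (by simpa using hne)
  | succ n ih =>
    intro s1 s2 h1 h2 hne
    rw [← OrderHom.map_lfp (rinner C H R)]
    refine Or.inr (Or.inl ?_)
    exact ih (C.next s1) (C.next s2) h1 h2 (by
      simpa [Function.iterate_succ_apply] using hne)

/-- Completeness: the semantic relation is a post-fixpoint of `rbisimF`. -/
lemma semRel_postfix : semRel C H ⊆ rbisimF C H (semRel C H) := by
  intro q hq
  by_cases hc : C.trace q.1 = C.trace q.2.1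
  · have hh := hq hc
    show q ∈ OrderHom.lfp (rinner C H (semRel C H))
    rw [← OrderHom.map_lfp (rinner C H (semRel C H))]
    refine Or.inr (Or.inr ⟨leak_eq_of_trace_eq H hh, ?_⟩)
    intro _
    exact trace_eq_next H hh
  · have : ∃ n, C.trace q.1 n ≠ C.trace q.2.1 n := by
      by_contra h
      push_neg at h
      exact hc (funext h)
    obtain ⟨n, hn⟩ := this
    exact diff_mem_lfp C H (semRel C H) n q.1 q.2.1 q.2.2.1 q.2.2.2 hn

/-- Soundness helper target set. -/
def soundT (R : Set (Quad Sc Sh)) : Set (Quad Sc Sh) :=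
  {q | C.trace q.1 = C.trace q.2.1 →
      H.leak q.2.2.1 = H.leak q.2.2.2 ∧
      ∃ q' : Quad Sc Sh, q' ∈ R ∧ C.trace q'.1 = C.trace q'.2.1 ∧
        q'.2.2.1 = H.next q.2.2.1 ∧ q'.2.2.2 = H.next q.2.2.2}

lemma lfp_le_soundT (R : Set (Quad Sc Sh)) (hR : R ⊆ rbisimF C H R) :
    OrderHom.lfp (rinner C H R) ⊆ soundT C H R := by
  apply OrderHom.lfp_le
  intro q hq hc
  rcases hq with h1 | h2 | h3
  · exact absurd (leak_eq_of_trace_eq C hc) h1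
  · exact h2 (trace_eq_next C hc)
  · exact ⟨h3.1, (q.1, q.2.1, H.next q.2.2.1, H.next q.2.2.2), h3.2, hc, rfl, rfl⟩

/-- Soundness: any post-fixpoint is contained in the semantic relation. -/
lemma postfix_sound (R : Set (Quad Sc Sh)) (hR : R ⊆ rbisimF C H R) :
    R ⊆ semRel C H := by
  have key : ∀ n : ℕ, ∀ q ∈ R, C.trace q.1 = C.trace q.2.1 →
      H.leak (H.next^[n] q.2.2.1) = H.leak (H.next^[n] q.2.2.2) := by
    intro n
    induction n with
    | zero =>
      intro q hq hc
      simpa using (lfp_le_soundT C H R hR (hR hq) hc).1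
    | succ n ih =>
      intro q hq hc
      obtain ⟨q', hq', hc', e1, e2⟩ := (lfp_le_soundT C H R hR (hR hq) hc).2
      have := ih q' hq' hc'
      rw [e1, e2] at this
      simpa [Function.iterate_succ_apply] using this
  intro q hq hc
  funext n
  exact key n q hq hc

end Aux

theorem relative_trace_eq_iff_exists_rbisimulation {Sc A Sh B : Type*}
    (C : TS Sc A) (H : TS Sh B) (s1 s2 : Sc) (h1 h2 : Sh) :
    (C.trace s1 = C.trace s2 → H.trace h1 = H.trace h2) ↔
      ∃ R : Set (Quad Sc Sh), (s1, s2, h1, h2) ∈ R ∧ R ⊆ rbisimF C H R := by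
  constructor
  · intro h
    exact ⟨semRel C H, h, semRel_postfix C H⟩
  · rintro ⟨R, hmem, hpost⟩
    exact postfix_sound C H R hpost hmem
end

section
/- Paco accumulation: for a monotone F, if X ⊆ G_F(I ∪ X) then X ⊆ G_F(I). -/
theorem paco_accumulate {U : Type*} (F : Set U →o Set U) (X I : Set U)
    (h : X ⊆ GF F (I ∪ X)) : X ⊆ GF F I := by
  set f : Set U →o Set U := ⟨fun Y => F (Y ∪ I),
    fun _ _ hYZ => F.monotone (Set.union_subset_union hYZ (subset_refl I))⟩ with hf
  set g : Set U →o Set U := ⟨fun Y => F (Y ∪ (I ∪ X)),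
    fun _ _ hYZ => F.monotone (Set.union_subset_union hYZ (subset_refl _))⟩ with hg
  have key : GF F (I ∪ X) ⊆ GF F I := by
    apply OrderHom.le_gfp f
    have hfix : g (OrderHom.gfp g) = OrderHom.gfp g := OrderHom.map_gfp g
    show GF F (I ∪ X) ≤ F (GF F (I ∪ X) ∪ I)
    have : GF F (I ∪ X) = F (GF F (I ∪ X) ∪ (I ∪ X)) := hfix.symm
    refine this.le.trans (F.monotone ?_)
    intro u hu
    rcases hu with hu | hu | hu
    · exact Or.inl hu
    · exact Or.inr hu
    · exact Or.inl (h hu)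
  exact fun u hu => key (h hu)
end

section
/- Paco step rule: for a monotone F, if X ⊆ F(I ∪ G_F(I)) then X ⊆ G_F(I). -/
theorem paco_step {U : Type*} (F : Set U →o Set U) (X I : Set U)
    (h : X ⊆ F (I ∪ GF F I)) : X ⊆ GF F I := by
  have hfix := OrderHom.map_gfp (⟨fun X => F (X ∪ I),
    fun _ _ h => F.monotone (Set.union_subset_union h (subset_refl I))⟩ : Set U →o Set U)
  calc X ⊆ F (I ∪ GF F I) := h
    _ = F (GF F I ∪ I) := by rw [Set.union_comm]
    _ = GF F I := hfix
end

section
/- The C-Leak rule is sound: if leak_C(s₁) ≠ leak_C(s₂), then the guarded proof quintuple [R] ⊢ (s₁, s₂, h₁, h₂) holds, i.e., (s₁, s₂, h₁, h₂) ∈ G_F(R) for F = rbisimF. -/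
theorem cLeak_sound {Sc A Sh B : Type*} (C : TS Sc A) (H : TS Sh B)
    (R : Set (Quad Sc Sh)) (s1 s2 : Sc) (h1 h2 : Sh)
    (h : C.leak s1 ≠ C.leak s2) :
    (s1, s2, h1, h2) ∈ GF (rbisimF C H) R := by
  rw [GF, ← OrderHom.map_gfp]
  show _ ∈ rbisimF C H _
  rw [rbisimF]
  show _ ∈ OrderHom.lfp (rinner C H _)
  rw [← OrderHom.map_lfp]
  exact Or.inl h
end

section
/- The C-Step rule is sound: if (next_C(s₁), next_C(s₂), h₁, h₂) ∈ G_F(R), then (s₁, s₂, h₁, h₂) ∈ G_F(R), where F = rbisimF. -/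
theorem cStep_sound {Sc A Sh B : Type*} (C : TS Sc A) (H : TS Sh B)
    (R : Set (Quad Sc Sh)) (s1 s2 : Sc) (h1 h2 : Sh)
    (h : (C.next s1, C.next s2, h1, h2) ∈ GF (rbisimF C H) R) :
    (s1, s2, h1, h2) ∈ GF (rbisimF C H) R := by
  set Fp : Set (Quad Sc Sh) →o Set (Quad Sc Sh) :=
    ⟨fun X => rbisimF C H (X ∪ R),
      fun _ _ h => (rbisimF C H).monotone (Set.union_subset_union h (subset_refl R))⟩
  have hfix : Fp (GF (rbisimF C H) R) = GF (rbisimF C H) R := OrderHom.map_gfp Fp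
  rw [← hfix]
  show _ ∈ OrderHom.lfp (rinner C H (GF (rbisimF C H) R ∪ R))
  rw [← OrderHom.map_lfp (rinner C H (GF (rbisimF C H) R ∪ R))]
  refine Or.inr (Or.inl ?_)
  rw [← hfix] at h
  exact h
end

section
/- The H-Step rule is sound: if leak_H(h₁) = leak_H(h₂) and (s₁, s₂, next_H(h₁), next_H(h₂)) ∈ R ∪ G_F(R), then (s₁, s₂, h₁, h₂) ∈ G_F(R), where F = rbisimF. -/
theorem GF_eq {U : Type*} (F : Set U →o Set U) (I : Set U) : GF F I = F (GF F I ∪ I) :=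
  (OrderHom.map_gfp _).symm

theorem rbisimF_eq {Sc A Sh B : Type*} (C : TS Sc A) (H : TS Sh B) (R : Set (Quad Sc Sh)) :
    rbisimF C H R = rinner C H R (rbisimF C H R) :=
  (OrderHom.map_lfp _).symm

theorem mem_rbisimF_of_leak_eq {Sc A Sh B : Type*} (C : TS Sc A) (H : TS Sh B)
    {R : Set (Quad Sc Sh)} {s1 s2 : Sc} {h1 h2 : Sh} (hleak : H.leak h1 = H.leak h2)
    (h : (s1, s2, H.next h1, H.next h2) ∈ R) : (s1, s2, h1, h2) ∈ rbisimF C H R := by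
  rw [rbisimF_eq]
  exact Or.inr (Or.inr ⟨hleak, h⟩)

theorem hStep_sound {Sc A Sh B : Type*} (C : TS Sc A) (H : TS Sh B)
    (R : Set (Quad Sc Sh)) (s1 s2 : Sc) (h1 h2 : Sh)
    (hleak : H.leak h1 = H.leak h2)
    (h : (s1, s2, H.next h1, H.next h2) ∈ R ∪ GF (rbisimF C H) R) :
    (s1, s2, h1, h2) ∈ GF (rbisimF C H) R := by
  rw [GF_eq]
  exact mem_rbisimF_of_leak_eq C H hleak h.symm
end

section
/- The Invariant rule is sound: if (s₁, s₂, h₁, h₂) ∈ R' and for all (s₁', s₂', h₁', h₂') ∈ R' the guarded quintuple with hypothesis R ∪ R' holds, then the guarded quintuple with hypothesis R holds for (s₁, s₂, h₁, h₂). -/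
theorem invariant_sound {Sc A Sh B : Type*} (C : TS Sc A) (H : TS Sh B)
    (R R' : Set (Quad Sc Sh)) (s1 s2 : Sc) (h1 h2 : Sh)
    (hmem : (s1, s2, h1, h2) ∈ R')
    (hinv : ∀ q ∈ R', q ∈ GF (rbisimF C H) (R ∪ R')) :
    (s1, s2, h1, h2) ∈ GF (rbisimF C H) R := by
  set F := rbisimF C H
  set G := GF F (R ∪ R') with hG
  have hR'G : R' ⊆ G := fun q hq => hinv q hq
  have hfix : F (G ∪ (R ∪ R')) = G := by
    have := OrderHom.map_gfp
      (⟨fun X => F (X ∪ (R ∪ R')),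
        fun _ _ h => F.monotone (Set.union_subset_union h (subset_refl _))⟩ :
        Set (Quad Sc Sh) →o Set (Quad Sc Sh))
    exact this
  have hle : G ≤ F (G ∪ R) := by
    calc G = F (G ∪ (R ∪ R')) := hfix.symm
    _ ≤ F (G ∪ R) := F.monotone (by
        intro q hq
        rcases hq with h | h | h
        · exact Or.inl h
        · exact Or.inr h
        · exact Or.inl (hR'G h))
  have : G ≤ GF F R := OrderHom.le_gfp
    (f := ⟨fun X => F (X ∪ R),
      fun _ _ h => F.monotone (Set.union_subset_union h (subset_refl R))⟩) hle
  exact this (hinv _ hmem)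
end

section
/- Coinduction up-to: if f is compatible with a monotone F (i.e., ∀X, f(F(X)) ⊆ F(f(X))), and there exists I with X ⊆ I and I ⊆ F(f(I)), then X ⊆ νF. -/
theorem coinduction_up_to {U : Type*} (F f : Set U →o Set U)
    (hcompat : ∀ X : Set U, f (F X) ⊆ F (f X)) (X : Set U)
    (h : ∃ I : Set U, X ⊆ I ∧ I ⊆ F (f I)) : X ⊆ OrderHom.gfp F := by
  obtain ⟨I, hXI, hI⟩ := h
  have key : ∀ n, (f : Set U → Set U)^[n] I ⊆ F ((f : Set U → Set U)^[n+1] I) := by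
    intro n
    induction n with
    | zero => simpa using hI
    | succ n ih =>
      rw [Function.iterate_succ_apply']
      calc (f : Set U → Set U) ((f : Set U → Set U)^[n] I)
          ⊆ f (F ((f : Set U → Set U)^[n+1] I)) := f.monotone ih
        _ ⊆ F (f ((f : Set U → Set U)^[n+1] I)) := hcompat _
        _ = F ((f : Set U → Set U)^[n+2] I) := by
            rw [show (f : Set U → Set U) ((f : Set U → Set U)^[n+1] I) = (f : Set U → Set U)^[n+2] I from (Function.iterate_succ_apply' _ _ _).symm]
  set J : Set U := ⋃ n, (f : Set U → Set U)^[n] I with hJ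
  have hJF : J ≤ F J := by
    intro x hx
    obtain ⟨n, hn⟩ := Set.mem_iUnion.mp hx
    exact F.monotone (Set.subset_iUnion (fun n => (f : Set U → Set U)^[n] I) (n+1))
      (key n hn)
  have hIJ : I ⊆ J := Set.subset_iUnion (fun n => (f : Set U → Set U)^[n] I) 0
  exact hXI.trans (hIJ.trans (OrderHom.le_gfp F hJF))
end

section
/- The general Augment-Hardware-Leakage rule is unsound: there exist deterministic transition systems C, H and states s, h₁, h₂, h₁', h₂' such that (s, s, h₁', h₂') ∈ G_F(⊤) and (h₁', h₂', h₁, h₂) ∈ G_F(∅) (viewing the second quintuple over system H on both sides), yet (s, s, h₁, h₂) ∉ G_F(⊤). -/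
theorem augment_hardware_leakage_unsound :
    ∃ (Sc A Sh B : Type) (C : TS Sc A) (H : TS Sh B) (s : Sc) (h1 h2 h1' h2' : Sh),
      (s, s, h1', h2') ∈ GF (rbisimF C H) Set.univ ∧
      (h1', h2', h1, h2) ∈ GF (rbisimF H H) ∅ ∧
      (s, s, h1, h2) ∉ GF (rbisimF C H) Set.univ := by
  classical
  refine ⟨Unit, Unit, Fin 4, Bool,
    ⟨id, fun _ => ()⟩, ⟨![0, 1, 0, 1], ![false, true, false, false]⟩,
    (), 0, 1, 2, 3, ?_, ?_, ?_⟩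
  · -- GF F univ = F (gfp ∪ univ), membership via third disjunct
    rw [GF, ← OrderHom.map_gfp]
    show _ ∈ OrderHom.lfp (rinner _ _ _)
    rw [← OrderHom.map_lfp]
    exact Or.inr (Or.inr ⟨by decide, Or.inr trivial⟩)
  · -- coinduction with R = {(2,3,0,1),(0,1,0,1)}
    set H : TS (Fin 4) Bool := ⟨![0, 1, 0, 1], ![false, true, false, false]⟩ with hH
    set R : Set (Quad (Fin 4) (Fin 4)) :=
      {((2:Fin 4), (3:Fin 4), (0:Fin 4), (1:Fin 4)), ((0:Fin 4), (1:Fin 4), (0:Fin 4), (1:Fin 4))}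
      with hR
    have h01 : ((0:Fin 4), (1:Fin 4), (0:Fin 4), (1:Fin 4)) ∈
        OrderHom.lfp (rinner H H (R ∪ ∅)) := by
      rw [← OrderHom.map_lfp]
      exact Or.inl (by decide)
    have h23 : ((2:Fin 4), (3:Fin 4), (0:Fin 4), (1:Fin 4)) ∈
        OrderHom.lfp (rinner H H (R ∪ ∅)) := by
      rw [← OrderHom.map_lfp]
      exact Or.inr (Or.inl h01)
    have hsub : R ≤ GF (rbisimF H H) ∅ := by
      apply OrderHom.le_gfp
      intro q hq
      rcases hq with hq | hq
      · rw [hq]; exact h23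
      · rw [hq]; exact h01
    exact hsub (Or.inl rfl)
  · intro hmem
    rw [GF, ← OrderHom.map_gfp] at hmem
    set C : TS Unit Unit := ⟨id, fun _ => ()⟩
    set H : TS (Fin 4) Bool := ⟨![0, 1, 0, 1], ![false, true, false, false]⟩
    have hmem' : ((), (), (0:Fin 4), (1:Fin 4)) ∈ OrderHom.lfp (rinner C H Set.univ) := by
      simp only [rbisimF, Set.union_univ] at hmem
      rwa [← OrderHom.map_gfp] at hmem
    have hle : OrderHom.lfp (rinner C H Set.univ) ≤
        {q : Quad Unit (Fin 4) | H.leak q.2.2.1 = H.leak q.2.2.2} := by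
      apply OrderHom.lfp_le
      intro q hq
      rcases hq with h1 | h2 | h3
      · exact absurd rfl h1
      · exact h2
      · exact h3.1
    have := hle hmem'
    exact absurd this (by decide)
end
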